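/- arXiv:2402.12373 — 4 statements merged into one kernel-verified Lean document; each statement's English description precedes it below -/
import Mathlib

section
/- Let tr be a trace over Σ with |tr| ≤ L, let φ be an LTL formula, and let cs₀ be the characteristic sequence of φ over tr. Define iteratively cs_{i+1}(j) = cs_i(j) OR cs_i(j + 2^i) for all j ∈ ℕ. Then for every i with 2^i ≥ L and every j ∈ ℕ, cs_i(j) = true if and only if tr, j ⊨ F φ; i.e., after ⌈log₂ L⌉ shift-and-or steps the exponential-propagation algorithm computes the characteristic sequence of F φ. -/
/-- LTL formulae over an alphabet `α`. -/
inductive LTL (α : Type) : Type where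
  | atom : α → LTL α
  | neg : LTL α → LTL α
  | conj : LTL α → LTL α → LTL α
  | disj : LTL α → LTL α → LTL α
  | next : LTL α → LTL α
  | ev : LTL α → LTL α
  | alw : LTL α → LTL α
  | untl : LTL α → LTL α → LTL α

/-- Finite-trace satisfaction `tr, i ⊨ φ`: false whenever `i ≥ |tr|`,
and for `i < |tr|` the standard clauses. A trace is a finite sequence
(list) of sets of characters. -/
def Sat {α : Type} (tr : List (Set α)) : LTL α → ℕ → Prop
  | .atom p, i => i < tr.length ∧ p ∈ tr.getD i ∅
  | .neg φ, i => i < tr.length ∧ ¬ Sat tr φ i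
  | .conj φ ψ, i => Sat tr φ i ∧ Sat tr ψ i
  | .disj φ ψ, i => i < tr.length ∧ (Sat tr φ i ∨ Sat tr ψ i)
  | .next φ, i => Sat tr φ (i + 1)
  | .ev φ, i => ∃ j, i ≤ j ∧ j < tr.length ∧ Sat tr φ j
  | .alw φ, i => i < tr.length ∧ ∀ j, i ≤ j → j < tr.length → Sat tr φ j
  | .untl φ ψ, i =>
      ∃ j, i ≤ j ∧ j < tr.length ∧ Sat tr ψ j ∧ ∀ k, i ≤ k → k < j → Sat tr φ k

/-- Exponential propagation computes the characteristic sequence of `F φ`: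
if `|tr| ≤ L`, `cs 0` is the characteristic sequence of `φ` over `tr`, and
`cs (i+1) j = cs i j || cs i (j + 2^i)`, then for every `i` with `2^i ≥ L`
and every `j`, `cs i j = true` iff `tr, j ⊨ F φ`. -/
theorem stmt_0 {α : Type} [Fintype α] [Nonempty α]
    (L : ℕ) (tr : List (Set α)) (hL : tr.length ≤ L)
    (φ : LTL α) (cs : ℕ → ℕ → Bool)
    (h0 : ∀ j, cs 0 j = true ↔ Sat tr φ j)
    (hstep : ∀ i j, cs (i + 1) j = (cs i j || cs i (j + 2 ^ i))) :
    ∀ i, L ≤ 2 ^ i → ∀ j, (cs i j = true ↔ Sat tr (LTL.ev φ) j) := by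
  have hlt : ∀ (ψ : LTL α) (k : ℕ), Sat tr ψ k → k < tr.length := by
    intro ψ
    induction ψ with
    | atom p => intro k h; exact h.1
    | neg ψ ih => intro k h; exact h.1
    | conj ψ χ ih1 ih2 => intro k h; exact ih1 k h.1
    | disj ψ χ ih1 ih2 => intro k h; exact h.1
    | next ψ ih => intro k h; exact Nat.lt_of_succ_lt (ih (k+1) h)
    | ev ψ ih => rintro k ⟨j, hj, hj2, _⟩; exact lt_of_le_of_lt hj hj2
    | alw ψ ih => intro k h; exact h.1
    | untl ψ χ ih1 ih2 => rintro k ⟨j, hj, hj2, _⟩; exact lt_of_le_of_lt hj hj2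
  have key : ∀ i j, cs i j = true ↔ ∃ d, d < 2 ^ i ∧ Sat tr φ (j + d) := by
    intro i
    induction i with
    | zero =>
      intro j
      rw [h0 j]
      constructor
      · intro h; exact ⟨0, by norm_num, by simpa using h⟩
      · rintro ⟨d, hd, hs⟩
        interval_cases d
        simpa using hs
    | succ i ih =>
      intro j
      rw [hstep i j]
      simp only [Bool.or_eq_true, ih]
      constructor
      · rintro (⟨d, hd, hs⟩ | ⟨d, hd, hs⟩)
        · exact ⟨d, lt_of_lt_of_le hd (by rw [pow_succ]; omega), hs⟩
        · exact ⟨2 ^ i + d, by rw [pow_succ]; omega, by rwa [← add_assoc]⟩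
      · rintro ⟨d, hd, hs⟩
        rcases lt_or_ge d (2 ^ i) with h | h
        · exact Or.inl ⟨d, h, hs⟩
        · refine Or.inr ⟨d - 2 ^ i, by rw [pow_succ] at hd; omega, ?_⟩
          have : j + 2 ^ i + (d - 2 ^ i) = j + d := by omega
          rwa [this]
  intro i hi j
  rw [key i j]
  constructor
  · rintro ⟨d, hd, hs⟩
    exact ⟨j + d, Nat.le_add_right _ _, hlt φ _ hs, hs⟩
  · rintro ⟨k, hjk, hk, hs⟩
    refine ⟨k - j, by omega, ?_⟩
    have : j + (k - j) = k := by omega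
    rwa [this]
end

section
/- Let tr be a trace over Σ, φ an LTL formula, cs₀ the characteristic sequence of φ over tr, and define iteratively cs_{i+1}(j) = cs_i(j) OR cs_i(j + 2^i) for all j ∈ ℕ. Then for every i ∈ ℕ and every j ∈ ℕ: cs_i(j) = true if and only if tr, j ⊨ F≤2^i φ. -/
/-- Bounded eventually: `tr, i ⊨ F≤p φ` iff there is `i ≤ k < min (i+p) |tr|`
with `tr, k ⊨ φ`. -/
def SatFle {α : Type} (tr : List (Set α)) (φ : LTL α) (p i : ℕ) : Prop :=
  ∃ k, i ≤ k ∧ k < min (i + p) tr.length ∧ Sat tr φ k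

/-- Bounded always: `tr, i ⊨ G≥p φ` iff `tr, k ⊨ φ` for all
`i ≤ k < min (i+p) |tr|` (vacuously true if this range is empty). -/
def SatGge {α : Type} (tr : List (Set α)) (φ : LTL α) (p i : ℕ) : Prop :=
  ∀ k, i ≤ k → k < min (i + p) tr.length → Sat tr φ k

/-- Bounded until: `tr, i ⊨ φ U≤p ψ` iff there is `i ≤ k < min (i+p) |tr|`
such that `tr, k ⊨ ψ` and `tr, k' ⊨ φ` for all `i ≤ k' < k`. -/
def SatUle {α : Type} (tr : List (Set α)) (φ ψ : LTL α) (p i : ℕ) : Prop :=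
  ∃ k, i ≤ k ∧ k < min (i + p) tr.length ∧ Sat tr ψ k ∧
    ∀ k', i ≤ k' → k' < k → Sat tr φ k'


lemma Sat_lt {α : Type} (tr : List (Set α)) : ∀ (φ : LTL α) (i : ℕ),
    Sat tr φ i → i < tr.length := by
  intro φ
  induction φ with
  | atom p => intro i h; exact h.1
  | neg φ ih => intro i h; exact h.1
  | conj φ ψ ihφ ihψ => intro i h; exact ihφ i h.1
  | disj φ ψ ihφ ihψ => intro i h; exact h.1
  | next φ ih => intro i h; have := ih (i+1) h; omega
  | ev φ ih => intro i h; obtain ⟨j, h1, h2, _⟩ := h; omega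
  | alw φ ih => intro i h; exact h.1
  | untl φ ψ ihφ ihψ => intro i h; obtain ⟨j, h1, h2, _⟩ := h; omega

/-- Invariant of exponential propagation for `F`: after `i` iterations,
`cs i j = true` iff `tr, j ⊨ F≤2^i φ`. -/
theorem stmt_1 {α : Type} [Fintype α] [Nonempty α]
    (tr : List (Set α)) (φ : LTL α) (cs : ℕ → ℕ → Bool)
    (h0 : ∀ j, cs 0 j = true ↔ Sat tr φ j)
    (hstep : ∀ i j, cs (i + 1) j = (cs i j || cs i (j + 2 ^ i))) :
    ∀ i j, (cs i j = true ↔ SatFle tr φ (2 ^ i) j) := by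
  simp only [SatFle]
  intro i
  induction i with
  | zero =>
    intro j
    rw [h0 j]
    constructor
    · intro h
      exact ⟨j, le_refl j, by
        have := Sat_lt tr φ j h
        omega, h⟩
    · rintro ⟨k, hk1, hk2, hk3⟩
      have : k = j := by omega
      rwa [this] at hk3
  | succ i ih =>
    intro j
    rw [hstep i j, Bool.or_eq_true, ih j, ih (j + 2 ^ i)]
    constructor
    · rintro (⟨k, h1, h2, h3⟩ | ⟨k, h1, h2, h3⟩) <;>
        exact ⟨k, by omega, by simp only [pow_succ] at *; omega, h3⟩
    · rintro ⟨k, h1, h2, h3⟩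
      by_cases hc : k < j + 2 ^ i
      · left; exact ⟨k, h1, by omega, h3⟩
      · right; exact ⟨k, by omega, by simp only [pow_succ] at *; omega, h3⟩
end

section
/- Let tr be a trace over Σ, let φ₁, φ₂ be LTL formulae, let cs1₀, cs2₀ be the characteristic sequences of φ₁ and φ₂ over tr, and define iteratively, for all j ∈ ℕ: cs1_{i+1}(j) = cs1_i(j) AND cs1_i(j + 2^i), and cs2_{i+1}(j) = cs2_i(j) OR (cs1_i(j) AND cs2_i(j + 2^i)). Then for every i ∈ ℕ and every j ∈ ℕ: (a) cs1_i(j) = true if and only if j + 2^i ≤ |tr| and tr, k ⊨ φ₁ for all j ≤ k < j + 2^i; and (b) cs2_i(j) = true if and only if tr, j ⊨ φ₁ U≤2^i φ₂. -/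
/-!
Doubling. A `φ₁`-window of length `2^(i+1)` at `j` is two `φ₁`-windows of length `2^i`, at `j`
and at `j + 2^i`; and `φ₁ U≤2^(i+1) φ₂` holds at `j` iff either its witness lies in the first
half, i.e. `φ₁ U≤2^i φ₂` holds at `j`, or the first half is a `φ₁`-window and
`φ₁ U≤2^i φ₂` holds at `j + 2^i`. These are exactly the two update rules, so the claim follows
by induction on `i`, the base case `2^0 = 1` being the characteristic sequences themselves.
-/

theorem Sat.lt_length {α : Type} {tr : List (Set α)} :
    ∀ {φ : LTL α} {i : ℕ}, Sat tr φ i → i < tr.length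
  | .atom _, _, h => h.1
  | .neg _, _, h => h.1
  | .conj _ _, _, h => Sat.lt_length h.1
  | .disj _ _, _, h => h.1
  | .next _, _, h => Nat.lt_of_succ_lt (Sat.lt_length h)
  | .ev _, _, ⟨_, hij, hj, _⟩ => lt_of_le_of_lt hij hj
  | .alw _, _, h => h.1
  | .untl _ _, _, ⟨_, hij, hj, _⟩ => lt_of_le_of_lt hij hj

def SatWindow {α : Type} (tr : List (Set α)) (φ : LTL α) (m j : ℕ) : Prop :=
  j + m ≤ tr.length ∧ ∀ k, j ≤ k → k < j + m → Sat tr φ k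

section

variable {α : Type} {tr : List (Set α)} {φ ψ : LTL α} {j : ℕ}

theorem satWindow_one : SatWindow tr φ 1 j ↔ Sat tr φ j :=
  ⟨fun h => h.2 j le_rfl (Nat.lt_succ_self j), fun h =>
    ⟨h.lt_length, fun k hjk hk => (show k = j by omega) ▸ h⟩⟩

theorem satWindow_add {m p : ℕ} :
    SatWindow tr φ (m + p) j ↔ SatWindow tr φ m j ∧ SatWindow tr φ p (j + m) := by
  constructor
  · rintro ⟨hlen, hsat⟩
    exact ⟨⟨by omega, fun k h₁ h₂ => hsat k h₁ (by omega)⟩,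
      ⟨by omega, fun k h₁ h₂ => hsat k (by omega) (by omega)⟩⟩
  · rintro ⟨⟨-, hsat₁⟩, hlen, hsat₂⟩
    refine ⟨by omega, fun k h₁ h₂ => ?_⟩
    rcases lt_or_ge k (j + m) with hk | hk
    · exact hsat₁ k h₁ hk
    · exact hsat₂ k hk (by omega)

theorem satUle_one : SatUle tr φ ψ 1 j ↔ Sat tr ψ j := by
  constructor
  · rintro ⟨k, hjk, hk, hψ, -⟩
    rw [lt_min_iff] at hk
    exact (show k = j by omega) ▸ hψ
  · intro hψ
    exact ⟨j, le_rfl, lt_min_iff.mpr ⟨Nat.lt_succ_self j, hψ.lt_length⟩, hψ,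
      fun k h₁ h₂ => absurd h₂ (not_lt.mpr h₁)⟩

theorem satUle_add {m p : ℕ} :
    SatUle tr φ ψ (m + p) j ↔
      SatUle tr φ ψ m j ∨ (SatWindow tr φ m j ∧ SatUle tr φ ψ p (j + m)) := by
  constructor
  · rintro ⟨k, hjk, hk, hψ, hφ⟩
    rw [lt_min_iff] at hk
    rcases lt_or_ge k (j + m) with hkm | hkm
    · exact Or.inl ⟨k, hjk, lt_min_iff.mpr ⟨hkm, hk.2⟩, hψ, hφ⟩
    · exact Or.inr ⟨⟨by omega, fun k' h₁ h₂ => hφ k' h₁ (by omega)⟩,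
        k, hkm, lt_min_iff.mpr ⟨by omega, hk.2⟩, hψ, fun k' h₁ h₂ => hφ k' (by omega) h₂⟩
  · rintro (⟨k, hjk, hk, hψ, hφ⟩ | ⟨⟨-, hφ₁⟩, k, hjk, hk, hψ, hφ₂⟩) <;> rw [lt_min_iff] at hk
    · exact ⟨k, hjk, lt_min_iff.mpr ⟨by omega, hk.2⟩, hψ, hφ⟩
    · refine ⟨k, by omega, lt_min_iff.mpr ⟨by omega, hk.2⟩, hψ, fun k' h₁ h₂ => ?_⟩
      rcases lt_or_ge k' (j + m) with hk' | hk'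
      · exact hφ₁ k' h₁ hk'
      · exact hφ₂ k' hk' h₂

end

theorem stmt_5_general {α : Type}
    (tr : List (Set α)) (φ₁ φ₂ : LTL α) (cs1 cs2 : ℕ → ℕ → Bool)
    (h10 : ∀ j, cs1 0 j = true ↔ Sat tr φ₁ j)
    (h20 : ∀ j, cs2 0 j = true ↔ Sat tr φ₂ j)
    (hstep1 : ∀ i j, cs1 (i + 1) j = (cs1 i j && cs1 i (j + 2 ^ i)))
    (hstep2 : ∀ i j, cs2 (i + 1) j = (cs2 i j || (cs1 i j && cs2 i (j + 2 ^ i)))) :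
    ∀ i j,
      (cs1 i j = true ↔
        (j + 2 ^ i ≤ tr.length ∧ ∀ k, j ≤ k → k < j + 2 ^ i → Sat tr φ₁ k)) ∧
      (cs2 i j = true ↔ SatUle tr φ₁ φ₂ (2 ^ i) j) := by
  show ∀ i j, (cs1 i j = true ↔ SatWindow tr φ₁ (2 ^ i) j) ∧
    (cs2 i j = true ↔ SatUle tr φ₁ φ₂ (2 ^ i) j)
  intro i
  induction i with
  | zero => exact fun j => ⟨(h10 j).trans satWindow_one.symm, (h20 j).trans satUle_one.symm⟩
  | succ i ih =>
    intro j
    rw [hstep1, hstep2, Bool.or_eq_true, Bool.and_eq_true, Bool.and_eq_true, (ih j).1, (ih j).2,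
      (ih (j + 2 ^ i)).1, (ih (j + 2 ^ i)).2, pow_succ, mul_two, satWindow_add, satUle_add]
    exact ⟨Iff.rfl, Iff.rfl⟩

/-- Invariant of exponential propagation for `U`: after `i` iterations,
(a) `cs1 i j = true` iff `j + 2^i ≤ |tr|` and `tr, k ⊨ φ₁` for all
`j ≤ k < j + 2^i`; and (b) `cs2 i j = true` iff `tr, j ⊨ φ₁ U≤2^i φ₂`. -/
theorem stmt_5 {α : Type} [Fintype α] [Nonempty α]
    (tr : List (Set α)) (φ₁ φ₂ : LTL α) (cs1 cs2 : ℕ → ℕ → Bool)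
    (h10 : ∀ j, cs1 0 j = true ↔ Sat tr φ₁ j)
    (h20 : ∀ j, cs2 0 j = true ↔ Sat tr φ₂ j)
    (hstep1 : ∀ i j, cs1 (i + 1) j = (cs1 i j && cs1 i (j + 2 ^ i)))
    (hstep2 : ∀ i j, cs2 (i + 1) j = (cs2 i j || (cs1 i j && cs2 i (j + 2 ^ i)))) :
    ∀ i j,
      (cs1 i j = true ↔
        (j + 2 ^ i ≤ tr.length ∧ ∀ k, j ≤ k → k < j + 2 ^ i → Sat tr φ₁ k)) ∧
      (cs2 i j = true ↔ SatUle tr φ₁ φ₂ (2 ^ i) j) :=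
  stmt_5_general tr φ₁ φ₂ cs1 cs2 h10 h20 hstep1 hstep2
end

section
/- For every trace tr over Σ, all LTL formulae φ, ψ, every position j ∈ ℕ and every p ∈ ℕ: tr, j ⊨ φ U≤2p ψ if and only if tr, j ⊨ φ U≤p ψ, or (tr, j ⊨ G≥p φ and tr, j+p ⊨ φ U≤p ψ). -/
/-- Doubling law for bounded until: `tr, j ⊨ φ U≤2p ψ` iff
`tr, j ⊨ φ U≤p ψ`, or (`tr, j ⊨ G≥p φ` and `tr, j+p ⊨ φ U≤p ψ`). -/
theorem stmt_6 {α : Type} [Fintype α] [Nonempty α]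
    (tr : List (Set α)) (φ ψ : LTL α) (j p : ℕ) :
    SatUle tr φ ψ (2 * p) j ↔
      (SatUle tr φ ψ p j ∨ (SatGge tr φ p j ∧ SatUle tr φ ψ p (j + p))) := by
  constructor
  · rintro ⟨k, hjk, hk, hψ, hφ⟩
    rcases lt_or_ge k (j + p) with h | h
    · exact Or.inl ⟨k, hjk, lt_min h (lt_of_lt_of_le hk (min_le_right _ _)), hψ, hφ⟩
    · refine Or.inr ⟨fun k' hk' hk'lt => hφ k' hk' (lt_of_lt_of_le (lt_of_lt_of_le hk'lt (min_le_left _ _)) h),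
        ⟨k, h, ?_, hψ, fun k' hk' hk'lt => hφ k' (le_trans (Nat.le_add_right j p) hk') hk'lt⟩⟩
      have : j + p + p = j + 2 * p := by ring
      rw [this]; exact hk
  · rintro (⟨k, hjk, hk, hψ, hφ⟩ | ⟨hG, ⟨k, hjk, hk, hψ, hφ⟩⟩)
    · refine ⟨k, hjk, ?_, hψ, hφ⟩
      exact lt_min (lt_of_lt_of_le (lt_of_lt_of_le hk (min_le_left _ _)) (by omega)) (lt_of_lt_of_le hk (min_le_right _ _))
    · refine ⟨k, le_trans (Nat.le_add_right j p) hjk, ?_, hψ, ?_⟩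
      · have h2 : j + p + p = j + 2 * p := by ring
        rw [← h2]; exact hk
      · intro k' hk' hk'lt
        rcases lt_or_ge k' (j + p) with h | h
        · exact hG k' hk' (lt_min h (lt_trans hk'lt (lt_of_lt_of_le hk (min_le_right _ _))))
        · exact hφ k' h hk'lt
end
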